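/- Let 0 ≤ γ < 1 and θ* > (2/e)√(1−γ). Let p_{θ*}(y) = (1/(2√(2π)))(e^{−(y−θ*)²/2} + e^{−(y+θ*)²/2}), q(y;θ) = 1/(1 + e^{2yθ}), M₀(θ) = ∫ (1 − 2q(y;θ)) y p_{θ*}(y) dy, and M_γ(θ) = γθ* + (1−γ) M₀(θ). Then for every θ > θ*: |M_γ(θ) − θ*| ≤ (1−γ) · (4/(θ*² e²)) · |θ − θ*|, and the contraction coefficient r = (1−γ)·4/(θ*² e²) satisfies r < 1. -/

import Mathlib

/-!
Since `1 - 2 q(y;θ) = tanh (θ y)`, the EM map is `M₀ θ = ∫ y tanh (θ y) p(y) dy`. Writing `p` as the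
average of the `N(±θ*, 1)` densities, `tanh (θ* y) p(y)` is half their difference, so `M₀ θ* = θ*`.
The derivative of `θ ↦ y tanh (θ y)` is `y² / cosh² (θ y) = (θ y)² / cosh² (θ y) / θ²`, and
`|x| e ≤ e^|x| ≤ 2 cosh x` bounds it by `4 / (θ*² e²)` for `θ ≥ θ*`. Averaging against the probability
density `p` makes `M₀` Lipschitz with that constant on `[θ*, ∞)`, and `M_γ - θ* = (1 - γ)(M₀ - θ*)`.
-/

open MeasureTheory ProbabilityTheory Real

namespace Real

theorem hasDerivAt_tanh (x : ℝ) : HasDerivAt tanh (1 / cosh x ^ 2) x := by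
  have h := (hasDerivAt_sinh x).div (hasDerivAt_cosh x) (cosh_pos x).ne'
  rw [show sinh / cosh = tanh from funext fun y => (tanh_eq_sinh_div_cosh y).symm] at h
  exact h.congr_deriv (by rw [← cosh_sq_sub_sinh_sq x]; ring)

@[fun_prop]
theorem continuous_tanh : Continuous tanh :=
  continuous_iff_continuousAt.2 fun x => (hasDerivAt_tanh x).continuousAt

theorem tanh_eq_exp_two_mul (x : ℝ) : tanh x = (exp (2 * x) - 1) / (exp (2 * x) + 1) := by
  have hx : exp (2 * x) = exp x * exp x := by rw [← exp_add, two_mul]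
  rw [tanh_eq_sinh_div_cosh, sinh_eq, cosh_eq, hx, exp_neg]
  have := exp_pos x
  field_simp

theorem one_sub_two_mul_one_div_one_add_exp (x : ℝ) :
    1 - 2 * (1 / (1 + exp (2 * x))) = tanh x := by
  have := exp_pos (2 * x)
  rw [tanh_eq_exp_two_mul]
  field_simp
  ring

theorem abs_mul_exp_one_le_two_mul_cosh (x : ℝ) : |x| * exp 1 ≤ 2 * cosh x := by
  have h : |x| * exp 1 ≤ exp |x| := by
    have := add_one_le_exp (|x| - 1)
    rw [show exp |x| = exp (|x| - 1) * exp 1 by rw [← exp_add, sub_add_cancel]]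
    gcongr
    linarith
  rw [cosh_eq]
  linarith [exp_abs_le x]

theorem sq_div_cosh_sq_le (x : ℝ) : x ^ 2 / cosh x ^ 2 ≤ 4 / exp 1 ^ 2 := by
  have h := pow_le_pow_left₀ (by positivity) (abs_mul_exp_one_le_two_mul_cosh x) 2
  rw [div_le_div_iff₀ (by positivity) (by positivity), ← sq_abs x]
  linarith

theorem sq_div_cosh_mul_sq_le (y : ℝ) {a u : ℝ} (ha : 0 < a) (hu : a ≤ u) :
    y ^ 2 / cosh (y * u) ^ 2 ≤ 4 / (a ^ 2 * exp 1 ^ 2) := by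
  have hu0 : 0 < u := ha.trans_le hu
  calc y ^ 2 / cosh (y * u) ^ 2 = (y * u) ^ 2 / cosh (y * u) ^ 2 / u ^ 2 := by
        field_simp
    _ ≤ 4 / exp 1 ^ 2 / u ^ 2 := by gcongr ?_ / _; exact sq_div_cosh_sq_le _
    _ ≤ 4 / exp 1 ^ 2 / a ^ 2 := by gcongr
    _ = 4 / (a ^ 2 * exp 1 ^ 2) := by ring

theorem abs_mul_tanh_mul_sub_le (y : ℝ) {a s t : ℝ} (ha : 0 < a) (hs : a ≤ s) (ht : a ≤ t) :
    |y * tanh (y * s) - y * tanh (y * t)| ≤ 4 / (a ^ 2 * exp 1 ^ 2) * |s - t| := by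
  have hderiv (u : ℝ) :
      HasDerivAt (fun u => y * tanh (y * u)) (y ^ 2 / cosh (y * u) ^ 2) u := by
    have := ((hasDerivAt_tanh (y * u)).comp u ((hasDerivAt_id u).const_mul y)).const_mul y
    exact this.congr_deriv (by ring)
  have := (convex_Ici a).norm_image_sub_le_of_norm_hasDerivWithin_le
    (fun u _ => (hderiv u).hasDerivWithinAt)
    (fun u hu => by
      rw [norm_of_nonneg (by positivity)]
      exact sq_div_cosh_mul_sq_le y ha hu) ht hs
  simpa only [norm_eq_abs] using this

end Real

theorem abs_integral_mul_sub_integral_mul_le {α : Type*} [MeasurableSpace α] {μ : Measure α}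
    {f g w : α → ℝ} {K : ℝ} (hf : Integrable (fun x => f x * w x) μ)
    (hg : Integrable (fun x => g x * w x) μ) (hw : Integrable w μ) (hw0 : ∀ x, 0 ≤ w x)
    (hK : ∀ x, |f x - g x| ≤ K) :
    |∫ x, f x * w x ∂μ - ∫ x, g x * w x ∂μ| ≤ K * ∫ x, w x ∂μ := by
  rw [← integral_sub hf hg, ← integral_const_mul]
  refine (abs_integral_le_integral_abs).trans (integral_mono (hf.sub hg).abs (hw.const_mul K) ?_)
  intro x
  dsimp only
  rw [← sub_mul, abs_mul, abs_of_nonneg (hw0 x)]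
  exact mul_le_mul_of_nonneg_right (hK x) (hw0 x)

theorem integrable_mul_gaussianPDFReal (μ : ℝ) {v : NNReal} (hv : v ≠ 0) :
    Integrable (fun x => x * gaussianPDFReal μ v x) := by
  have h : Integrable id (gaussianReal μ v) := (memLp_id_gaussianReal 1).integrable (by simp)
  rw [gaussianReal_of_var_ne_zero μ hv, integrable_withDensity_iff_integrable_smul'
    (measurable_gaussianPDF μ v) (ae_of_all _ fun _ => gaussianPDF_lt_top)] at h
  simpa only [toReal_gaussianPDF, smul_eq_mul, id, mul_comm] using h

theorem integral_mul_gaussianPDFReal (μ : ℝ) {v : NNReal} (hv : v ≠ 0) :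
    ∫ x, x * gaussianPDFReal μ v x = μ := by
  simpa only [integral_gaussianReal_eq_integral_smul hv, id, smul_eq_mul, mul_comm]
    using integral_id_gaussianReal (μ := μ) (v := v)

theorem gaussianPDFReal_eq_mul_exp (θ y : ℝ) :
    gaussianPDFReal θ 1 y = gaussianPDFReal (-θ) 1 y * exp (2 * (y * θ)) := by
  simp only [gaussianPDFReal, NNReal.coe_one, mul_one, mul_assoc, ← exp_add]
  ring_nf

noncomputable def symmGaussMixturePDF (θ y : ℝ) : ℝ :=
  (gaussianPDFReal θ 1 y + gaussianPDFReal (-θ) 1 y) / 2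

theorem symmGaussMixturePDF_eq (θ y : ℝ) : symmGaussMixturePDF θ y =
    1 / (2 * √(2 * π)) * (exp (-(y - θ) ^ 2 / 2) + exp (-(y + θ) ^ 2 / 2)) := by
  simp only [symmGaussMixturePDF, gaussianPDFReal, NNReal.coe_one, mul_one, sub_neg_eq_add]
  ring

theorem symmGaussMixturePDF_nonneg (θ y : ℝ) : 0 ≤ symmGaussMixturePDF θ y := by
  have := gaussianPDFReal_nonneg θ 1 y
  have := gaussianPDFReal_nonneg (-θ) 1 y
  unfold symmGaussMixturePDF
  positivity

theorem integrable_symmGaussMixturePDF (θ : ℝ) : Integrable (symmGaussMixturePDF θ) :=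
  ((integrable_gaussianPDFReal θ 1).add (integrable_gaussianPDFReal (-θ) 1)).div_const 2

theorem integral_symmGaussMixturePDF (θ : ℝ) : ∫ y, symmGaussMixturePDF θ y = 1 := by
  unfold symmGaussMixturePDF
  rw [integral_div, integral_add (integrable_gaussianPDFReal θ 1)
    (integrable_gaussianPDFReal (-θ) 1), integral_gaussianPDFReal_eq_one θ one_ne_zero,
    integral_gaussianPDFReal_eq_one (-θ) one_ne_zero]
  norm_num

theorem integrable_mul_symmGaussMixturePDF (θ : ℝ) :
    Integrable (fun y => y * symmGaussMixturePDF θ y) := by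
  simp only [symmGaussMixturePDF, mul_div_assoc', mul_add]
  exact ((integrable_mul_gaussianPDFReal θ one_ne_zero).add
    (integrable_mul_gaussianPDFReal (-θ) one_ne_zero)).div_const 2

theorem tanh_mul_mul_symmGaussMixturePDF (θ y : ℝ) :
    tanh (y * θ) * symmGaussMixturePDF θ y =
      (gaussianPDFReal θ 1 y - gaussianPDFReal (-θ) 1 y) / 2 := by
  have := exp_pos (2 * (y * θ))
  rw [symmGaussMixturePDF, tanh_eq_exp_two_mul, gaussianPDFReal_eq_mul_exp]
  field_simp

noncomputable def symmGaussMixtureEM (θstar θ : ℝ) : ℝ :=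
  ∫ y, y * tanh (y * θ) * symmGaussMixturePDF θstar y

theorem integrable_mul_tanh_mul_symmGaussMixturePDF (θstar θ : ℝ) :
    Integrable (fun y => y * tanh (y * θ) * symmGaussMixturePDF θstar y) := by
  have := (integrable_mul_symmGaussMixturePDF θstar).bdd_mul (c := 1)
    (f := fun y => tanh (y * θ)) (by fun_prop)
    (ae_of_all _ fun y => by simpa only [norm_eq_abs] using (abs_tanh_lt_one _).le)
  exact this.congr (ae_of_all _ fun y => by ring)

theorem symmGaussMixtureEM_self (θ : ℝ) : symmGaussMixtureEM θ θ = θ := by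
  have hsplit : (fun y => y * tanh (y * θ) * symmGaussMixturePDF θ y) =
      fun y => (y * gaussianPDFReal θ 1 y - y * gaussianPDFReal (-θ) 1 y) / 2 := by
    funext y
    rw [mul_assoc, tanh_mul_mul_symmGaussMixturePDF]
    ring
  rw [symmGaussMixtureEM, hsplit, integral_div, integral_sub
    (integrable_mul_gaussianPDFReal θ one_ne_zero) (integrable_mul_gaussianPDFReal (-θ) one_ne_zero),
    integral_mul_gaussianPDFReal θ one_ne_zero, integral_mul_gaussianPDFReal (-θ) one_ne_zero]
  ring

theorem abs_symmGaussMixtureEM_sub_le (θstar : ℝ) {a s t : ℝ} (ha : 0 < a) (hs : a ≤ s)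
    (ht : a ≤ t) :
    |symmGaussMixtureEM θstar s - symmGaussMixtureEM θstar t| ≤
      4 / (a ^ 2 * exp 1 ^ 2) * |s - t| := by
  have := abs_integral_mul_sub_integral_mul_le
    (integrable_mul_tanh_mul_symmGaussMixturePDF θstar s)
    (integrable_mul_tanh_mul_symmGaussMixturePDF θstar t)
    (integrable_symmGaussMixturePDF θstar) (symmGaussMixturePDF_nonneg θstar)
    (fun y => abs_mul_tanh_mul_sub_le y ha hs ht)
  rwa [integral_symmGaussMixturePDF, mul_one] at this

theorem mul_four_div_sq_mul_exp_one_sq_lt_one {c θ : ℝ} (hc : 0 ≤ c)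
    (hθ : 2 / exp 1 * √c < θ) : c * (4 / (θ ^ 2 * exp 1 ^ 2)) < 1 := by
  have he := exp_pos 1
  have hlt : 2 * √c < θ * exp 1 := by
    rwa [div_mul_eq_mul_div, div_lt_iff₀ he] at hθ
  have hsq := pow_lt_pow_left₀ hlt (by positivity) two_ne_zero
  rw [mul_pow, sq_sqrt hc] at hsq
  have : 0 < θ := lt_of_le_of_lt (by positivity) hθ
  rw [← mul_div_assoc, div_lt_one (by positivity)]
  nlinarith

theorem symmetric_gaussian_mixture_em_global_convergence_item1_general
    (γ θstar : ℝ) (hγ1 : γ < 1)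
    (hθstar : θstar > (2 / Real.exp 1) * Real.sqrt (1 - γ))
    (p : ℝ → ℝ)
    (hp : p = fun y => (1 / (2 * Real.sqrt (2 * Real.pi))) *
      (Real.exp (-(y - θstar) ^ 2 / 2) + Real.exp (-(y + θstar) ^ 2 / 2)))
    (q : ℝ → ℝ → ℝ)
    (hq : q = fun θ y => 1 / (1 + Real.exp (2 * y * θ)))
    (M0 : ℝ → ℝ)
    (hM0 : M0 = fun θ => ∫ y : ℝ, (1 - 2 * q θ y) * y * p y)
    (Mγ : ℝ → ℝ)
    (hMγ : Mγ = fun θ => γ * θstar + (1 - γ) * M0 θ)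
    (r : ℝ)
    (hr : r = (1 - γ) * (4 / (θstar ^ 2 * Real.exp 1 ^ 2))) :
    (∀ θ > θstar, |Mγ θ - θstar| ≤ r * |θ - θstar|) ∧ r < 1 := by
  have hγ : 0 ≤ 1 - γ := by linarith
  have hθstar_pos : 0 < θstar := lt_of_le_of_lt (by positivity) hθstar
  have hM0_eq : M0 = symmGaussMixtureEM θstar := by
    funext θ
    simp only [hM0, hq, hp, symmGaussMixtureEM]
    congr 1 with y
    rw [symmGaussMixturePDF_eq, mul_assoc 2 y θ, one_sub_two_mul_one_div_one_add_exp]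
    ring
  refine ⟨fun θ hθ => ?_, hr ▸ mul_four_div_sq_mul_exp_one_sq_lt_one hγ hθstar⟩
  have hshrink : Mγ θ - θstar =
      (1 - γ) * (symmGaussMixtureEM θstar θ - symmGaussMixtureEM θstar θstar) := by
    rw [hMγ, hM0_eq, symmGaussMixtureEM_self]
    ring
  calc |Mγ θ - θstar|
      = (1 - γ) * |symmGaussMixtureEM θstar θ - symmGaussMixtureEM θstar θstar| := by
        rw [hshrink, abs_mul, abs_of_nonneg hγ]
    _ ≤ (1 - γ) * (4 / (θstar ^ 2 * exp 1 ^ 2) * |θ - θstar|) := by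
        gcongr
        exact abs_symmGaussMixtureEM_sub_le θstar hθstar_pos hθ.le le_rfl
    _ = r * |θ - θstar| := by rw [hr, mul_assoc]

/-- Theorem 3, item 1: for the symmetric two-component Gaussian
mixture, when `θstar > (2/e)√(1−γ)` the semi-supervised population EM map `Mγ`
contracts globally from any `θ > θstar` at rate `r = (1−γ)·4/(θstar² e²) < 1`. -/
theorem symmetric_gaussian_mixture_em_global_convergence_item1
    (γ θstar : ℝ) (hγ0 : 0 ≤ γ) (hγ1 : γ < 1)
    (hθstar : θstar > (2 / Real.exp 1) * Real.sqrt (1 - γ))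
    (p : ℝ → ℝ)
    (hp : p = fun y => (1 / (2 * Real.sqrt (2 * Real.pi))) *
      (Real.exp (-(y - θstar) ^ 2 / 2) + Real.exp (-(y + θstar) ^ 2 / 2)))
    (q : ℝ → ℝ → ℝ)
    (hq : q = fun θ y => 1 / (1 + Real.exp (2 * y * θ)))
    (M0 : ℝ → ℝ)
    (hM0 : M0 = fun θ => ∫ y : ℝ, (1 - 2 * q θ y) * y * p y)
    (Mγ : ℝ → ℝ)
    (hMγ : Mγ = fun θ => γ * θstar + (1 - γ) * M0 θ)
    (r : ℝ)
    (hr : r = (1 - γ) * (4 / (θstar ^ 2 * Real.exp 1 ^ 2))) :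
    (∀ θ > θstar, |Mγ θ - θstar| ≤ r * |θ - θstar|) ∧ r < 1 :=
  symmetric_gaussian_mixture_em_global_convergence_item1_general γ θstar hγ1 hθstar p hp q hq M0 hM0
    Mγ hMγ r hr
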